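/- Let G be a finite group, M a semi-Mackey functor on G, and S ⊆ M(G/e) a saturated G-invariant submonoid. Put S₀ = (pt_{G/e}^*)⁻¹(S) ⊆ M(G/G). For each transitive finite G-set X define 𝒰_S(X) to be the saturation of pt_X^*(S₀) in M(X). Then 𝒰_S is a semi-Mackey subfunctor of M, and it is the maximum semi-Mackey subfunctor 𝒮 satisfying 𝒮(G/e) ⊆ S. Moreover 𝒰_S(G/e) = S. -/

import Mathlib

/-- A finite `G`-set: a finite type equipped with a `G`-action. -/
structure FinGSet (G : Type) [Group G] where
  carrier : Type
  [fin : Fintype carrier]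
  [act : MulAction G carrier]

attribute [instance] FinGSet.fin FinGSet.act

/-- A map of `G`-sets is equivariant if it commutes with the action. -/
def IsEquivariant {G : Type} [Group G] {X Y : FinGSet G}
    (f : X.carrier → Y.carrier) : Prop :=
  ∀ (g : G) (x : X.carrier), f (g • x) = g • f x

/-- The disjoint union of two finite `G`-sets. -/
def FinGSet.sum {G : Type} [Group G] (X Y : FinGSet G) : FinGSet G where
  carrier := X.carrier ⊕ Y.carrier

/-- A semi-Mackey functor on `G` with underlying family of commutative monoids `N`:
a contravariant functor `res` (restriction) and a covariant functor `tr`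
(transfer) on finite `G`-sets, additive on disjoint unions and satisfying the
Mackey (base change) condition on all pullback diagrams. -/
structure SemiMackey (G : Type) [Group G] (N : FinGSet G → Type)
    [∀ X, CommMonoid (N X)] where
  res : ∀ {X Y : FinGSet G} (f : X.carrier → Y.carrier), IsEquivariant f → (N Y →* N X)
  tr : ∀ {X Y : FinGSet G} (f : X.carrier → Y.carrier), IsEquivariant f → (N X →* N Y)
  res_id : ∀ (X : FinGSet G) (h : IsEquivariant (id : X.carrier → X.carrier)) (m : N X),
    res id h m = m
  tr_id : ∀ (X : FinGSet G) (h : IsEquivariant (id : X.carrier → X.carrier)) (m : N X),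
    tr id h m = m
  res_comp : ∀ {X Y Z : FinGSet G} (f : X.carrier → Y.carrier) (hf : IsEquivariant f)
    (g : Y.carrier → Z.carrier) (hg : IsEquivariant g)
    (hgf : IsEquivariant (g ∘ f)) (m : N Z),
    res (g ∘ f) hgf m = res f hf (res g hg m)
  tr_comp : ∀ {X Y Z : FinGSet G} (f : X.carrier → Y.carrier) (hf : IsEquivariant f)
    (g : Y.carrier → Z.carrier) (hg : IsEquivariant g)
    (hgf : IsEquivariant (g ∘ f)) (m : N X),
    tr (g ∘ f) hgf m = tr g hg (tr f hf m)
  additive : ∀ (X Y : FinGSet G)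
    (h₁ : IsEquivariant (X := X) (Y := FinGSet.sum X Y) Sum.inl)
    (h₂ : IsEquivariant (X := Y) (Y := FinGSet.sum X Y) Sum.inr),
    Function.Bijective (fun m : N (FinGSet.sum X Y) => (res Sum.inl h₁ m, res Sum.inr h₂ m))
  mackey : ∀ {P X W Y : FinGSet G}
    (f : X.carrier → Y.carrier) (hf : IsEquivariant f)
    (g : W.carrier → Y.carrier) (hg : IsEquivariant g)
    (pX : P.carrier → X.carrier) (hpX : IsEquivariant pX)
    (pW : P.carrier → W.carrier) (hpW : IsEquivariant pW)
    (hcomm : ∀ p, f (pX p) = g (pW p)),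
    Function.Bijective
      (fun p : P.carrier =>
        (⟨(pX p, pW p), hcomm p⟩ : {q : X.carrier × W.carrier // f q.1 = g q.2})) →
    ∀ m : N W, res f hf (tr g hg m) = tr pX hpX (res pW hpW m)

/-- The saturation of a subset of a commutative monoid. -/
def satSet {M : Type*} [CommMonoid M] (S : Set M) : Set M :=
  {x | ∃ a : M, ∃ s ∈ S, a * x = s}

/-- The one-point `G`-set `G/G`. -/
def ptObj (G : Type) [Group G] : FinGSet G where
  carrier := PUnit
  act :=
    { smul := fun _ _ => PUnit.unit
      one_smul := fun _ => rfl
      mul_smul := fun _ _ _ => rfl }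

/-- The constant map `pt_X : X → G/G`. -/
def ptMap {G : Type} [Group G] (X : FinGSet G) : X.carrier → (ptObj G).carrier :=
  fun _ => PUnit.unit

theorem ptMap_equivariant {G : Type} [Group G] (X : FinGSet G) :
    IsEquivariant (ptMap X) := fun _ _ => rfl

/-- The free orbit `G/e`, i.e. `G` with the left translation action. -/
abbrev GeObj (G : Type) [Group G] [Fintype G] : FinGSet G where
  carrier := G

theorem rmul_equivariant {G : Type} [Group G] [Fintype G] (g : G) :
    IsEquivariant (X := GeObj G) (Y := GeObj G) (fun x => x * g) :=
  fun a x => by simp [GeObj, smul_eq_mul, mul_assoc]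

/-!
By the Mackey formula, `pt_X^* pt_{X*} t` is the transfer along `X × X → X` of a restriction of
`t`, and the diagonal summand of that transfer is `t` itself; so `t ∣ pt_X^* pt_{X*} t`. This
gives maximality at once (for `t ∈ 𝒮(X)`, `pt_{X*} t` restricts into `𝒮(G/e) ⊆ S`), and closure
of `𝒰_S` under transfers once `pt_{X*} pt_X^*` preserves `S₀`. By the Mackey formula again, that
last fact and `S ⊆ 𝒰_S(G/e)` reduce to `tr_u res_v s ∈ S` for equivariant `u v : Z → G/e`: a
`G`-set over `G/e` is a disjoint union of free orbits, on each of which `tr_u res_v` is the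
restriction along a right multiplication of `G/e`, under which `S` is invariant.
-/

open MulAction

theorem mem_satSet_iff {M : Type*} [CommMonoid M] {T : Set M} {x : M} :
    x ∈ satSet T ↔ ∃ s ∈ T, x ∣ s := by
  simp only [satSet, Set.mem_ofPred_eq, dvd_iff_exists_eq_mul_right, mul_comm x]
  aesop

theorem Submonoid.coe_saturation_eq_satSet {M : Type*} [CommMonoid M] (T : Submonoid M) :
    (T.saturation.toSubmonoid : Set M) = satSet (T : Set M) := by
  ext x
  simp only [SetLike.mem_coe, mem_satSet_iff]
  exact Submonoid.mem_saturation_iff_exists_dvd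

namespace IsEquivariant

variable {G : Type} [Group G] {X Y Z : FinGSet G}

protected theorem id : IsEquivariant (_root_.id : X.carrier → X.carrier) := fun _ _ => rfl

theorem comp {g : Y.carrier → Z.carrier} {f : X.carrier → Y.carrier}
    (hg : IsEquivariant g) (hf : IsEquivariant f) : IsEquivariant (g ∘ f) := fun a x => by
  simp only [Function.comp_apply, hf a x, hg a (f x)]

theorem of_leftInverse {f : X.carrier → Y.carrier} {f' : Y.carrier → X.carrier}
    (hf : IsEquivariant f) (hl : Function.LeftInverse f' f) (hr : Function.RightInverse f' f) :
    IsEquivariant f' := fun a y => hl.injective (by rw [hr, hf, hr])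

end IsEquivariant

namespace FinGSet

abbrev empty (G : Type) [Group G] : FinGSet G where
  carrier := PEmpty
  act :=
    { smul := fun _ x => x
      one_smul := fun _ => rfl
      mul_smul := fun _ _ _ => rfl }

variable {G : Type} [Group G]

abbrev prod (A B : FinGSet G) : FinGSet G where
  carrier := A.carrier × B.carrier

def IsInvariant (X : FinGSet G) (p : X.carrier → Prop) : Prop :=
  ∀ (g : G) x, p (g • x) ↔ p x

theorem IsInvariant.not {X : FinGSet G} {p : X.carrier → Prop} (hp : X.IsInvariant p) :
    X.IsInvariant (¬ p ·) :=
  fun g x => not_congr (hp g x)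

noncomputable abbrev sub (X : FinGSet G) (p : X.carrier → Prop) (hp : X.IsInvariant p) :
    FinGSet G where
  carrier := {x // p x}
  fin := Fintype.ofFinite _
  act :=
    { smul := fun g x => ⟨g • x.1, (hp g x.1).2 x.2⟩
      one_smul := fun x => Subtype.ext (one_smul G x.1)
      mul_smul := fun g h x => Subtype.ext (mul_smul g h x.1) }

theorem inl_equivariant (A B : FinGSet G) :
    IsEquivariant (X := A) (Y := A.sum B) Sum.inl := fun _ _ => rfl

theorem inr_equivariant (A B : FinGSet G) :
    IsEquivariant (X := B) (Y := A.sum B) Sum.inr := fun _ _ => rfl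

theorem fst_equivariant (A B : FinGSet G) :
    IsEquivariant (X := A.prod B) (Y := A) Prod.fst := fun _ _ => rfl

theorem snd_equivariant (A B : FinGSet G) :
    IsEquivariant (X := A.prod B) (Y := B) Prod.snd := fun _ _ => rfl

theorem val_equivariant (X : FinGSet G) (p : X.carrier → Prop) (hp : X.IsInvariant p) :
    IsEquivariant (X := X.sub p hp) (Y := X) Subtype.val := fun _ _ => rfl

end FinGSet

theorem eq_mul_right_of_isEquivariant {G : Type} [Group G] [Fintype G]
    {w : G → G} (hw : IsEquivariant (X := GeObj G) (Y := GeObj G) w) : w = fun x => x * w 1 := by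
  funext x
  simpa using hw x 1

theorem bijective_restrict_orbit {G : Type} [Group G] [Fintype G] {X : FinGSet G}
    {u : X.carrier → G} (hu : IsEquivariant (Y := GeObj G) u) (x₀ : X.carrier)
    (hp : X.IsInvariant (· ∈ orbit G x₀)) :
    Function.Bijective (u ∘ Subtype.val : (X.sub (· ∈ orbit G x₀) hp).carrier → G) := by
  have hu' : ∀ g : G, u (g • x₀) = g * u x₀ := fun g => hu g x₀
  constructor
  · rintro ⟨_, g, rfl⟩ ⟨_, h, rfl⟩ hgh
    change u (g • x₀) = u (h • x₀) at hgh
    rw [hu', hu', mul_left_inj] at hgh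
    subst hgh
    rfl
  · intro y
    refine ⟨⟨(y * (u x₀)⁻¹) • x₀, mem_orbit _ _⟩, ?_⟩
    change u _ = y
    rw [hu', inv_mul_cancel_right]

namespace SemiMackey

variable {G : Type} [Group G] {N : FinGSet G → Type} [∀ X, CommMonoid (N X)]

theorem res_congr (M : SemiMackey G N) {X Y : FinGSet G} {f g : X.carrier → Y.carrier}
    (h : f = g) (hf : IsEquivariant f) (hg : IsEquivariant g) (m : N Y) :
    M.res f hf m = M.res g hg m := by
  subst h; rfl

theorem subsingleton_of_isEmpty (M : SemiMackey G N) {X : FinGSet G} (hX : IsEmpty X.carrier) :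
    Subsingleton (N X) := by
  have h₁ := X.inl_equivariant X
  have h₂ := X.inr_equivariant X
  refine ⟨fun a b => ?_⟩
  obtain ⟨w, hw⟩ := (M.additive X X h₁ h₂).2 (a, b)
  have ha : M.res Sum.inl h₁ w = a := congrArg Prod.fst hw
  have hb : M.res Sum.inr h₂ w = b := congrArg Prod.snd hw
  rw [← ha, ← hb]
  exact M.res_congr (funext hX.elim) h₁ h₂ w

variable (M : SemiMackey G N) {X Y Z : FinGSet G}

theorem res_res {f : X.carrier → Y.carrier} (hf : IsEquivariant f)
    {g : Y.carrier → Z.carrier} (hg : IsEquivariant g) (m : N Z) :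
    M.res f hf (M.res g hg m) = M.res (g ∘ f) (hg.comp hf) m :=
  (M.res_comp f hf g hg _ m).symm

theorem tr_tr {f : X.carrier → Y.carrier} (hf : IsEquivariant f)
    {g : Y.carrier → Z.carrier} (hg : IsEquivariant g) (m : N X) :
    M.tr g hg (M.tr f hf m) = M.tr (g ∘ f) (hg.comp hf) m :=
  (M.tr_comp f hf g hg _ m).symm

theorem res_of_eq_id {f : X.carrier → X.carrier} (h : f = id) (hf : IsEquivariant f)
    (m : N X) : M.res f hf m = m :=
  (M.res_congr h hf IsEquivariant.id m).trans (M.res_id X _ m)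

theorem res_tr_of_injective {f : X.carrier → Y.carrier} (hf : IsEquivariant f)
    (hinj : Function.Injective f) (m : N X) : M.res f hf (M.tr f hf m) = m := by
  have hpb : Function.Bijective (fun x : X.carrier =>
      (⟨(id x, id x), rfl⟩ : {q : X.carrier × X.carrier // f q.1 = f q.2})) :=
    ⟨fun _ _ h => congrArg (·.1.1) h,
      fun ⟨(x, _), hxy⟩ => ⟨x, Subtype.ext (congrArg (Prod.mk x) (hinj hxy))⟩⟩
  rw [M.mackey f hf f hf id IsEquivariant.id id IsEquivariant.id (fun _ => rfl) hpb,
    M.res_id, M.tr_id]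

theorem res_tr_of_disjoint {W : FinGSet G} {f : X.carrier → Y.carrier} (hf : IsEquivariant f)
    {g : W.carrier → Y.carrier} (hg : IsEquivariant g) (hfg : ∀ x w, f x ≠ g w) (m : N W) :
    M.res f hf (M.tr g hg m) = 1 := by
  have hE : IsEmpty (FinGSet.empty G).carrier := inferInstanceAs (IsEmpty PEmpty)
  let pX : (FinGSet.empty G).carrier → X.carrier := isEmptyElim
  let pW : (FinGSet.empty G).carrier → W.carrier := isEmptyElim
  have hpb : Function.Bijective (fun p =>
      (⟨(pX p, pW p), isEmptyElim p⟩ : {q : X.carrier × W.carrier // f q.1 = g q.2})) :=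
    ⟨fun p => isEmptyElim p, fun ⟨(x, w), h⟩ => (hfg x w h).elim⟩
  have hpX : IsEquivariant pX := fun _ p => isEmptyElim p
  have hpW : IsEquivariant pW := fun _ p => isEmptyElim p
  rw [M.mackey f hf g hg pX hpX pW hpW (fun p => isEmptyElim p) hpb,
    (M.subsingleton_of_isEmpty hE).elim (M.res pW _ m) 1, map_one]

theorem tr_eq_res_of_leftInverse {f : X.carrier → Y.carrier} (hf : IsEquivariant f)
    {f' : Y.carrier → X.carrier} (hf' : IsEquivariant f') (hl : Function.LeftInverse f' f)
    (hr : Function.RightInverse f' f) (m : N X) : M.tr f hf m = M.res f' hf' m := by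
  rw [← M.res_of_eq_id hr.comp_eq_id (hf.comp hf') (M.tr f hf m), ← M.res_res hf' hf,
    M.res_tr_of_injective hf hl.injective]

theorem tr_res_of_leftInverse {f : X.carrier → Y.carrier} (hf : IsEquivariant f)
    {f' : Y.carrier → X.carrier} (hl : Function.LeftInverse f' f)
    (hr : Function.RightInverse f' f) (n : N Y) : M.tr f hf (M.res f hf n) = n := by
  rw [M.tr_eq_res_of_leftInverse hf (hf.of_leftInverse hl hr) hl hr, M.res_res,
    M.res_of_eq_id hr.comp_eq_id]

theorem res_injective_of_rightInverse {f : X.carrier → Y.carrier} (hf : IsEquivariant f)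
    {f' : Y.carrier → X.carrier} (hf' : IsEquivariant f') (hr : Function.RightInverse f' f) :
    Function.Injective (M.res f hf) := fun m m' h => by
  have h' := congrArg (M.res f' hf') h
  rwa [M.res_res, M.res_res, M.res_of_eq_id hr.comp_eq_id, M.res_of_eq_id hr.comp_eq_id] at h'

theorem eq_of_res_eq_of_bijective {A B : FinGSet G} {i : A.carrier → X.carrier}
    (hi : IsEquivariant i) {j : B.carrier → X.carrier} (hj : IsEquivariant j)
    (hij : Function.Bijective (Sum.elim i j)) {m m' : N X}
    (hm₁ : M.res i hi m = M.res i hi m') (hm₂ : M.res j hj m = M.res j hj m') : m = m' := by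
  let Φ : (A.sum B).carrier → X.carrier := Sum.elim i j
  have hΦ : IsEquivariant Φ := by
    rintro g (a | b)
    exacts [hi g a, hj g b]
  have hinl := A.inl_equivariant B
  have hinr := A.inr_equivariant B
  refine M.res_injective_of_rightInverse hΦ
    (hΦ.of_leftInverse (Function.leftInverse_surjInv hij) (Function.rightInverse_surjInv hij.2))
    (Function.rightInverse_surjInv hij.2)
    ((M.additive A B hinl hinr).1 (Prod.ext ?_ ?_))
  · exact (M.res_res hinl hΦ m).trans (hm₁.trans (M.res_res hinl hΦ m').symm)
  · exact (M.res_res hinr hΦ m).trans (hm₂.trans (M.res_res hinr hΦ m').symm)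

theorem eq_tr_res_mul_tr_res {A B : FinGSet G} {i : A.carrier → X.carrier}
    (hi : IsEquivariant i) {j : B.carrier → X.carrier} (hj : IsEquivariant j)
    (hij : Function.Bijective (Sum.elim i j)) (n : N X) :
    n = M.tr i hi (M.res i hi n) * M.tr j hj (M.res j hj n) := by
  have hi_inj : Function.Injective i := hij.1.comp Sum.inl_injective
  have hj_inj : Function.Injective j := hij.1.comp Sum.inr_injective
  have hdisj : ∀ a b, i a ≠ j b := fun a b h => Sum.inl_ne_inr (hij.1 h)
  refine M.eq_of_res_eq_of_bijective hi hj hij ?_ ?_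
  · rw [map_mul, M.res_tr_of_injective hi hi_inj, M.res_tr_of_disjoint hi hj hdisj, mul_one]
  · rw [map_mul, M.res_tr_of_injective hj hj_inj,
      M.res_tr_of_disjoint hj hi (fun b a h => hdisj a b h.symm), one_mul]

theorem tr_eq_mul_of_invariant (p : X.carrier → Prop) (hp : X.IsInvariant p)
    {u : X.carrier → Y.carrier} (hu : IsEquivariant u) (n : N X) :
    M.tr u hu n =
      M.tr (u ∘ Subtype.val) (hu.comp (X.val_equivariant p hp))
          (M.res _ (X.val_equivariant p hp) n) *
        M.tr (u ∘ Subtype.val) (hu.comp (X.val_equivariant (¬ p ·) hp.not))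
          (M.res _ (X.val_equivariant (¬ p ·) hp.not) n) := by
  classical
  conv_lhs => rw [M.eq_tr_res_mul_tr_res (X.val_equivariant p hp) (X.val_equivariant _ hp.not)
    (Equiv.sumCompl p).bijective n]
  rw [map_mul, M.tr_tr, M.tr_tr]

theorem res_res_ptMap {f : X.carrier → Y.carrier} (hf : IsEquivariant f) (m : N (ptObj G)) :
    M.res f hf (M.res (ptMap Y) (ptMap_equivariant Y) m) =
      M.res (ptMap X) (ptMap_equivariant X) m :=
  M.res_res hf _ m

theorem tr_tr_ptMap {f : X.carrier → Y.carrier} (hf : IsEquivariant f) (n : N X) :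
    M.tr (ptMap Y) (ptMap_equivariant Y) (M.tr f hf n) = M.tr (ptMap X) (ptMap_equivariant X) n :=
  M.tr_tr hf _ n

theorem res_ptMap_tr_ptMap (W X : FinGSet G) (m : N X) :
    M.res (ptMap W) (ptMap_equivariant W) (M.tr (ptMap X) (ptMap_equivariant X) m) =
      M.tr _ (W.fst_equivariant X) (M.res _ (W.snd_equivariant X) m) := by
  have hpb : Function.Bijective fun p : (W.prod X).carrier =>
      (⟨p, rfl⟩ : {q : W.carrier × X.carrier // ptMap W q.1 = ptMap X q.2}) :=
    ⟨fun _ _ h => congrArg (·.1) h, fun q => ⟨q.1, rfl⟩⟩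
  exact M.mackey _ _ _ _ _ (W.fst_equivariant X) _ (W.snd_equivariant X) (fun _ => rfl) hpb m

theorem dvd_res_ptMap_tr_ptMap (t : N X) :
    t ∣ M.res (ptMap X) (ptMap_equivariant X) (M.tr (ptMap X) (ptMap_equivariant X) t) := by
  have hdiag : (X.prod X).IsInvariant (fun q => q.1 = q.2) := fun g q => smul_left_cancel_iff g
  rw [M.res_ptMap_tr_ptMap, M.tr_eq_mul_of_invariant _ hdiag, M.res_res]
  refine Dvd.intro _ (congrArg (· * _) ?_).symm
  let D := (X.prod X).sub _ hdiag
  have he : IsEquivariant (Prod.fst ∘ Subtype.val : D.carrier → X.carrier) :=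
    (X.fst_equivariant X).comp (FinGSet.val_equivariant _ _ hdiag)
  have hsnd_fst : (Prod.snd ∘ Subtype.val : D.carrier → X.carrier) = Prod.fst ∘ Subtype.val :=
    funext fun q => q.2.symm
  rw [M.res_congr hsnd_fst _ he]
  exact M.tr_res_of_leftInverse he (f' := fun x => ⟨(x, x), rfl⟩)
    (fun ⟨(x, y), hxy⟩ => by cases hxy; rfl) (fun _ => rfl) t

section Free

variable [Fintype G]

def IsGInvariant (S : Submonoid (N (GeObj G))) : Prop :=
  ∀ g : G, ∀ s ∈ S, M.res (fun x => x * g) (rmul_equivariant g) s ∈ S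

variable {S : Submonoid (N (GeObj G))}

theorem tr_res_mem_of_bijective (hinv : M.IsGInvariant S) {e w : X.carrier → G}
    (he : IsEquivariant (Y := GeObj G) e) (hw : IsEquivariant (Y := GeObj G) w)
    (he_bij : Function.Bijective e) {s : N (GeObj G)} (hs : s ∈ S) :
    M.tr e he (M.res w hw s) ∈ S := by
  let e' := Function.surjInv he_bij.2
  have hl : Function.LeftInverse e' e := Function.leftInverse_surjInv he_bij
  have hr : Function.RightInverse e' e := Function.rightInverse_surjInv he_bij.2
  have he' : IsEquivariant e' := he.of_leftInverse hl hr
  rw [M.tr_eq_res_of_leftInverse he he' hl hr, M.res_res,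
    M.res_congr (eq_mul_right_of_isEquivariant (hw.comp he')) _ (rmul_equivariant _)]
  exact hinv _ s hs

theorem tr_res_mem (hinv : M.IsGInvariant S) {u v : X.carrier → G}
    (hu : IsEquivariant (Y := GeObj G) u) (hv : IsEquivariant (Y := GeObj G) v)
    {s : N (GeObj G)} (hs : s ∈ S) :
    M.tr u hu (M.res v hv s) ∈ S := by
  induction hn : Nat.card X.carrier using Nat.strong_induction_on generalizing X with
  | _ n ih =>
  rcases isEmpty_or_nonempty X.carrier with hX | ⟨⟨x₀⟩⟩
  · rw [(M.subsingleton_of_isEmpty hX).elim (M.res v hv s) 1, map_one]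
    exact S.one_mem
  have hp : X.IsInvariant (· ∈ orbit G x₀) := fun g x => by
    simp only [← orbit_eq_iff, orbit_smul]
  rw [M.tr_eq_mul_of_invariant _ hp hu, M.res_res, M.res_res]
  refine S.mul_mem (M.tr_res_mem_of_bijective hinv _ _ (bijective_restrict_orbit hu x₀ hp) hs)
    (ih _ ?_ _ _ rfl)
  rw [← hn]
  exact Finite.card_subtype_lt (not_not_intro (mem_orbit_self x₀))

theorem res_ptMap_tr_ptMap_mem (hinv : M.IsGInvariant S) {s : N (GeObj G)} (hs : s ∈ S) :
    M.res (ptMap (GeObj G)) (ptMap_equivariant _)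
      (M.tr (ptMap (GeObj G)) (ptMap_equivariant _) s) ∈ S := by
  rw [res_ptMap_tr_ptMap]
  exact M.tr_res_mem hinv _ _ hs

theorem res_ptMap_tr_res_ptMap_mem (hinv : M.IsGInvariant S) {m : N (ptObj G)}
    (hm : M.res (ptMap (GeObj G)) (ptMap_equivariant _) m ∈ S) :
    M.res (ptMap (GeObj G)) (ptMap_equivariant _)
      (M.tr (ptMap X) (ptMap_equivariant X) (M.res (ptMap X) (ptMap_equivariant X) m)) ∈ S := by
  rw [res_ptMap_tr_ptMap, res_res_ptMap, ← M.res_res_ptMap ((GeObj G).fst_equivariant X)]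
  exact M.tr_res_mem hinv _ _ hm

end Free

section MaximalSubfunctor

variable [Fintype G] (S : Submonoid (N (GeObj G)))

def maxSub (X : FinGSet G) : Submonoid (N X) :=
  ((S.comap (M.res (ptMap (GeObj G)) (ptMap_equivariant _))).map
    (M.res (ptMap X) (ptMap_equivariant X))).saturation.toSubmonoid

theorem mem_maxSub_iff {x : N X} :
    x ∈ M.maxSub S X ↔ ∃ m, M.res (ptMap (GeObj G)) (ptMap_equivariant _) m ∈ S ∧
      x ∣ M.res (ptMap X) (ptMap_equivariant X) m := by
  simp only [maxSub, SaturatedSubmonoid.mem_toSubmonoid,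
    Submonoid.mem_saturation_iff_exists_dvd, Submonoid.mem_map, Submonoid.mem_comap]
  aesop

theorem coe_maxSub (X : FinGSet G) :
    (M.maxSub S X : Set (N X)) = satSet ((M.res (ptMap X) (ptMap_equivariant X)) ''
      ((M.res (ptMap (GeObj G)) (ptMap_equivariant (GeObj G))) ⁻¹' (S : Set (N (GeObj G))))) := by
  rw [maxSub, Submonoid.coe_saturation_eq_satSet, Submonoid.coe_map, Submonoid.coe_comap]

theorem res_mem_maxSub {f : X.carrier → Y.carrier} (hf : IsEquivariant f) {s : N Y}
    (hs : s ∈ M.maxSub S Y) : M.res f hf s ∈ M.maxSub S X := by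
  obtain ⟨m, hm, hsm⟩ := (M.mem_maxSub_iff S).1 hs
  refine (M.mem_maxSub_iff S).2 ⟨m, hm, ?_⟩
  rw [← M.res_res_ptMap hf]
  exact map_dvd _ hsm

theorem tr_mem_maxSub (hinv : M.IsGInvariant S) {f : X.carrier → Y.carrier}
    (hf : IsEquivariant f) {s : N X} (hs : s ∈ M.maxSub S X) : M.tr f hf s ∈ M.maxSub S Y := by
  obtain ⟨m, hm, hsm⟩ := (M.mem_maxSub_iff S).1 hs
  refine (M.mem_maxSub_iff S).2 ⟨_, M.res_ptMap_tr_res_ptMap_mem (X := X) hinv hm, ?_⟩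
  calc M.tr f hf s ∣ M.tr f hf (M.res (ptMap X) _ m) := map_dvd _ hsm
    _ ∣ _ := M.dvd_res_ptMap_tr_ptMap _
    _ = _ := by rw [M.tr_tr_ptMap]

theorem maxSub_geObj (hsat : satSet (S : Set (N (GeObj G))) = (S : Set (N (GeObj G))))
    (hinv : M.IsGInvariant S) : M.maxSub S (GeObj G) = S := by
  ext x
  refine ⟨fun hx => ?_, fun hx => ?_⟩
  · obtain ⟨m, hm, hxm⟩ := (M.mem_maxSub_iff S).1 hx
    rw [← SetLike.mem_coe, ← hsat]
    exact mem_satSet_iff.2 ⟨_, hm, hxm⟩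
  · exact (M.mem_maxSub_iff S).2
      ⟨_, M.res_ptMap_tr_ptMap_mem hinv hx, M.dvd_res_ptMap_tr_ptMap x⟩

theorem le_maxSub (T : ∀ X : FinGSet G, Submonoid (N X))
    (hres : ∀ {X Y : FinGSet G} (f : X.carrier → Y.carrier) (hf : IsEquivariant f),
      ∀ s ∈ T Y, M.res f hf s ∈ T X)
    (htr : ∀ {X Y : FinGSet G} (f : X.carrier → Y.carrier) (hf : IsEquivariant f),
      ∀ s ∈ T X, M.tr f hf s ∈ T Y)
    (hT : T (GeObj G) ≤ S) (X : FinGSet G) : T X ≤ M.maxSub S X := fun t ht =>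
  (M.mem_maxSub_iff S).2 ⟨_, hT (hres _ _ _ (htr _ _ t ht)), M.dvd_res_ptMap_tr_ptMap t⟩

end MaximalSubfunctor

end SemiMackey

/-- For a saturated `G`-invariant submonoid `S ⊆ M(G/e)`, with
`S₀ = (pt_{G/e}^*)⁻¹(S)`, the family `𝒰_S(X) = (pt_X^*(S₀))~` is a semi-Mackey
subfunctor of `M`; it is the maximum semi-Mackey subfunctor `𝒮` with
`𝒮(G/e) ⊆ S`, and moreover `𝒰_S(G/e) = S`. -/
theorem maxSub_spec {G : Type} [Group G] [Fintype G] {N : FinGSet G → Type}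
    [∀ X, CommMonoid (N X)] (M : SemiMackey G N)
    (S : Submonoid (N (GeObj G)))
    (hsat : satSet (S : Set (N (GeObj G))) = (S : Set (N (GeObj G))))
    (hinv : ∀ g : G, ∀ s ∈ S, M.res (fun x => x * g) (rmul_equivariant g) s ∈ S) :
    ∃ U : ∀ X : FinGSet G, Submonoid (N X),
      (∀ X : FinGSet G,
        (U X : Set (N X))
          = satSet ((M.res (ptMap X) (ptMap_equivariant X)) ''
              ((M.res (ptMap (GeObj G)) (ptMap_equivariant (GeObj G))) ⁻¹'
                (S : Set (N (GeObj G)))))) ∧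
      (∀ {X Y : FinGSet G} (f : X.carrier → Y.carrier) (hf : IsEquivariant f),
        (∀ s ∈ U Y, M.res f hf s ∈ U X) ∧ (∀ s ∈ U X, M.tr f hf s ∈ U Y)) ∧
      U (GeObj G) = S ∧
      (∀ T : ∀ X : FinGSet G, Submonoid (N X),
        (∀ {X Y : FinGSet G} (f : X.carrier → Y.carrier) (hf : IsEquivariant f),
          ∀ s ∈ T Y, M.res f hf s ∈ T X) →
        (∀ {X Y : FinGSet G} (f : X.carrier → Y.carrier) (hf : IsEquivariant f),
          ∀ s ∈ T X, M.tr f hf s ∈ T Y) →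
        T (GeObj G) ≤ S → ∀ X : FinGSet G, T X ≤ U X) :=
  ⟨M.maxSub S, M.coe_maxSub S,
    fun _ hf => ⟨fun _ => M.res_mem_maxSub S hf, fun _ => M.tr_mem_maxSub S hinv hf⟩,
    M.maxSub_geObj S hsat hinv, fun T hres htr hT => M.le_maxSub S T hres htr hT⟩
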